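/- arXiv:2005.01414 — 4 statements merged into one kernel-verified Lean document; each statement's English description precedes it below -/
import Mathlib

section
/- For every integer m ≥ 0 and every r > 0, there exists a constant C > 0 such that for all integers n ≥ 1, ‖F[Re v_{n,m}]‖_{L∞([-r,r]²)} ≤ C e^{−n}, where F denotes the two-dimensional Fourier transform. -/
open MeasureTheory Real Complex Finset

noncomputable section

/-- The closed box `[-r, r]^d` in `ℝ^d`. -/
def box (d : ℕ) (r : ℝ) : Set (Fin d → ℝ) := {ξ | ∀ j, |ξ j| ≤ r}

/-- The Fourier transform `F v (ξ) = (2π)^{-d} ∫ e^{i ξ·x} v(x) dx`. -/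
def FT (d : ℕ) (v : (Fin d → ℝ) → ℂ) (ξ : Fin d → ℝ) : ℂ :=
  (((2 * Real.pi) ^ d : ℝ) : ℂ)⁻¹ *
    ∫ x : Fin d → ℝ, Complex.exp (Complex.I * ((∑ j, ξ j * x j : ℝ) : ℂ)) * v x

/-- Chebyshev polynomial of the first kind, evaluated at a real number. -/
def cheb (k : ℕ) (t : ℝ) : ℝ := (Polynomial.Chebyshev.T ℝ (k : ℤ)).eval t

/-- The Chebyshev coefficients `a_{k₁,…,k_d}[w]` of a function `w` on `[-r,r]^d`. -/
def acoef (d : ℕ) (r : ℝ) (w : (Fin d → ℝ) → ℂ) (k : Fin d → ℕ) : ℂ :=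
  ∫ ξ in box d r, w ξ *
    (((∏ j, (2 : ℝ) ^ (if 0 < k j then 1 else 0) * cheb (k j) (ξ j / r) /
        (Real.pi * Real.sqrt (r ^ 2 - ξ j ^ 2))) : ℝ) : ℂ)

open scoped Classical in
/-- The extrapolation `C_{R,n}[w]` based on truncated Chebyshev series. -/
def chebExt (d : ℕ) (r R : ℝ) (n : ℕ) (w : (Fin d → ℝ) → ℂ) (ξ : Fin d → ℝ) : ℂ :=
  if ξ ∈ box d r then w ξ
  else if ξ ∈ box d R then
    ∑ k ∈ (Fintype.piFinset fun _ : Fin d => Finset.range n).filter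
        (fun k => ∑ j, k j < n),
      acoef d r w k * (((∏ j, cheb (k j) (ξ j / r)) : ℝ) : ℂ)
  else 0

/-- The bump function `g` from the paper (formula (31)). -/
def gfun (t : ℝ) : ℝ :=
  if 1 < t ∧ t < 2 then Real.exp (1 / ((t - 1) * (t - 2))) else 0

/-- The function `v_{n,m}(t cos φ, t sin φ) = n^{-m} e^{i n φ} g(t)` from the paper. -/
def vnm (n m : ℕ) (x : Fin 2 → ℝ) : ℂ :=
  ((n : ℂ) ^ m)⁻¹ *
    ((((x 0 : ℂ) + (x 1 : ℂ) * Complex.I) /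
        ((‖(x 0 : ℂ) + (x 1 : ℂ) * Complex.I‖ : ℝ) : ℂ)) ^ n) *
    ((gfun ‖(x 0 : ℂ) + (x 1 : ℂ) * Complex.I‖ : ℝ) : ℂ)

/-
`Re v_{n,m}(t cos φ, t sin φ) = n^{-m} g(t) cos (n φ)` is orthogonal to every polynomial of
degree `< n`: in polar coordinates `(ξ·x)^k = t^k (ξ₀ cos φ + ξ₁ sin φ)^k`, a trigonometric
polynomial of degree `k` in `φ`. Hence `F[Re v_{n,m}](ξ)` only sees the Taylor remainder of order
`n` of `e^{i ξ·x}`. On the support `|x| ≤ 2` we have `|ξ·x| ≤ R := 4r`, and the remainder is at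
most `∑_{j ≥ n} R^j / j! ≤ e^{-n} ∑_j (e R)^j / j! = e^{-n} e^{e R}`.
-/

open Function

theorem Real.exp_sub_sum_range_le {y : ℝ} (hy : 0 ≤ y) (n : ℕ) :
    Real.exp y - ∑ k ∈ range n, y ^ k / k.factorial ≤
      Real.exp (Real.exp 1 * y) * Real.exp (-n) := by
  have hsum : ∀ x : ℝ, Summable fun k : ℕ => x ^ k / k.factorial :=
    Real.summable_pow_div_factorial
  have hexp : ∀ x : ℝ, Real.exp x = ∑' k : ℕ, x ^ k / k.factorial := fun x => by
    rw [Real.exp_eq_exp_ℝ, NormedSpace.exp_eq_tsum_div]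
  have hterm : ∀ k : ℕ, y ^ (k + n) / (k + n).factorial ≤
      Real.exp (-n) * ((Real.exp 1 * y) ^ (k + n) / (k + n).factorial) := by
    intro k
    rw [mul_pow, Real.exp_one_pow, ← mul_div_assoc, ← mul_assoc, ← Real.exp_add]
    gcongr
    conv_lhs => rw [← one_mul (y ^ (k + n))]
    gcongr
    rw [Real.one_le_exp_iff]; push_cast; linarith
  rw [hexp y, ← (hsum y).sum_add_tsum_nat_add n, add_sub_cancel_left, hexp (Real.exp 1 * y),
    mul_comm, ← tsum_mul_left]
  have htail : Summable fun k : ℕ => (Real.exp 1 * y) ^ (k + n) / (k + n).factorial :=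
    (summable_nat_add_iff n).2 (hsum _)
  calc ∑' k : ℕ, y ^ (k + n) / (k + n).factorial
      ≤ ∑' k : ℕ, Real.exp (-n) * ((Real.exp 1 * y) ^ (k + n) / (k + n).factorial) :=
        ((summable_nat_add_iff n).2 (hsum y)).tsum_le_tsum hterm (htail.mul_left _)
    _ ≤ ∑' k : ℕ, Real.exp (-n) * ((Real.exp 1 * y) ^ k / k.factorial) := by
        rw [tsum_mul_left, tsum_mul_left]
        exact mul_le_mul_of_nonneg_left (tsum_comp_le_tsum_of_inj (hsum _)
          (fun k => by positivity) (add_left_injective n)) (Real.exp_pos _).le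

theorem Complex.norm_exp_sub_sum_range_le (z : ℂ) (n : ℕ) :
    ‖Complex.exp z - ∑ k ∈ range n, z ^ k / (k.factorial : ℂ)‖ ≤
      Real.exp (Real.exp 1 * ‖z‖) * Real.exp (-n) :=
  (norm_exp_sub_sum_le_exp_norm_sub_sum z n).trans (Real.exp_sub_sum_range_le (norm_nonneg z) n)

section CompactSupport

variable {α : Type*} [TopologicalSpace α] [MeasurableSpace α] [OpensMeasurableSpace α]
  {μ : Measure α} [IsFiniteMeasureOnCompacts μ] {K : Set α} {w : α → ℂ} {B : ℝ}

theorem Continuous.integrable_mul_of_support_subset {f : α → ℂ} (hf : Continuous f)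
    (hK : IsCompact K) (hw : AEStronglyMeasurable w μ) (hwB : ∀ x, ‖w x‖ ≤ B)
    (hsupp : support w ⊆ K) : Integrable (fun x => f x * w x) μ := by
  obtain ⟨M, hM⟩ := hK.exists_bound_of_continuousOn hf.continuousOn
  rw [← integrableOn_iff_integrable_of_support_subset
    ((support_mul_subset_right _ _).trans hsupp)]
  refine Measure.integrableOn_of_bounded (M := max M 0 * B) hK.measure_lt_top.ne
    (hf.aestronglyMeasurable.mul hw) (ae_of_all _ fun x => ?_)
  by_cases hx : x ∈ K
  · rw [norm_mul]
    exact mul_le_mul ((hM x hx).trans (le_max_left _ _)) (hwB x) (norm_nonneg _)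
      (le_max_right _ _)
  · rw [notMem_support.1 (mt (@hsupp x) hx), mul_zero, norm_zero]
    exact mul_nonneg (le_max_right _ _) ((norm_nonneg _).trans (hwB x))

theorem norm_integral_exp_mul_le_of_moments_eq_zero (hK : IsCompact K)
    (hw : AEStronglyMeasurable w μ) (hwB : ∀ x, ‖w x‖ ≤ B) (hsupp : support w ⊆ K)
    {φ : α → ℝ} (hφ : Continuous φ) {R : ℝ} (hφR : ∀ x ∈ K, |φ x| ≤ R) {n : ℕ}
    (hmom : ∀ k < n, ∫ x, (φ x : ℂ) ^ k * w x ∂μ = 0) :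
    ‖∫ x, Complex.exp (I * φ x) * w x ∂μ‖ ≤
      Real.exp (Real.exp 1 * R) * Real.exp (-n) * B * μ.real K := by
  set T : α → ℂ := fun x => ∑ k ∈ range n, (I * φ x) ^ k / (k.factorial : ℂ)
  have hint : ∀ {f : α → ℂ}, Continuous f → Integrable (fun x => f x * w x) μ :=
    fun hf => hf.integrable_mul_of_support_subset hK hw hwB hsupp
  have hTw : ∫ x, T x * w x ∂μ = 0 := by
    have hterm : ∀ x, T x * w x =
        ∑ k ∈ range n, I ^ k / (k.factorial : ℂ) * ((φ x : ℂ) ^ k * w x) := fun x => by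
      simp only [T, Finset.sum_mul, mul_pow]
      exact Finset.sum_congr rfl fun k _ => by ring
    simp only [hterm]
    rw [integral_finsetSum _ fun k _ => (hint (by fun_prop)).const_mul _]
    exact Finset.sum_eq_zero fun k hk => by
      rw [integral_const_mul, hmom k (Finset.mem_range.1 hk), mul_zero]
  have hsub : ∫ x, Complex.exp (I * φ x) * w x ∂μ =
      ∫ x in K, (Complex.exp (I * φ x) - T x) * w x ∂μ := by
    rw [setIntegral_eq_integral_of_forall_compl_eq_zero fun x hx => by
      rw [notMem_support.1 (mt (@hsupp x) hx), mul_zero]]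
    simp only [sub_mul]
    rw [integral_sub (hint (by fun_prop)) (hint (by fun_prop)), hTw, sub_zero]
  rw [hsub]
  refine norm_setIntegral_le_of_norm_le_const hK.measure_lt_top fun x hx => ?_
  rw [norm_mul]
  refine mul_le_mul ((norm_exp_sub_sum_range_le _ n).trans ?_) (hwB x) (norm_nonneg _)
    (by positivity)
  gcongr
  simpa [Complex.norm_real] using hφR x hx

end CompactSupport

theorem integral_exp_int_mul_I_eq_zero {M : ℤ} (hM : M ≠ 0) :
    ∫ θ in (-π)..π, exp (M * I * θ) = 0 := by
  have hMI : (M : ℂ) * I ≠ 0 := mul_ne_zero (Int.cast_ne_zero.2 hM) I_ne_zero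
  have hper : exp (M * I * π) = exp (M * I * (-π : ℝ)) := by
    rw [show (M : ℂ) * I * π = M * I * (-π : ℝ) + M * (2 * π * I) by push_cast; ring,
      Complex.exp_add, Complex.exp_int_mul_two_pi_mul_I, mul_one]
  rw [integral_exp_mul_complex hMI, hper, sub_self, zero_div]

theorem integral_cos_add_sin_pow_mul_exp_eq_zero (a b : ℝ) {k : ℕ} {N : ℤ}
    (hk : k < N.natAbs) :
    ∫ θ in (-π)..π, ((a * Real.cos θ + b * Real.sin θ : ℝ) : ℂ) ^ k * exp (N * θ * I) = 0 := by
  set α : ℂ := (a - b * I) / 2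
  set β : ℂ := (a + b * I) / 2
  have hexpand : ∀ θ : ℝ,
      ((a * Real.cos θ + b * Real.sin θ : ℝ) : ℂ) ^ k * exp (N * θ * I) =
        ∑ j ∈ range (k + 1), (k.choose j * (α ^ j * β ^ (k - j))) *
          exp (((N + 2 * j - k : ℤ) : ℂ) * I * θ) := by
    intro θ
    have hlin : ((a * Real.cos θ + b * Real.sin θ : ℝ) : ℂ) =
        α * exp (θ * I) + β * exp (-(θ * I)) := by
      rw [Complex.exp_mul_I, show -((θ : ℂ) * I) = ((-θ : ℝ) : ℂ) * I by push_cast; ring,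
        Complex.exp_mul_I, ofReal_neg, Complex.cos_neg, Complex.sin_neg]
      push_cast
      linear_combination (b * Complex.sin θ) * I_sq
    rw [hlin, add_pow, Finset.sum_mul]
    refine Finset.sum_congr rfl fun j hj => ?_
    have hjk : j ≤ k := Nat.lt_succ_iff.1 (mem_range.1 hj)
    have hexp : exp (j * (θ * I)) * exp (((k - j : ℕ) : ℂ) * -(θ * I)) * exp (N * θ * I) =
        exp (((N + 2 * j - k : ℤ) : ℂ) * I * θ) := by
      rw [← Complex.exp_add, ← Complex.exp_add]
      push_cast [hjk]
      ring_nf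
    rw [mul_pow, mul_pow, ← Complex.exp_nat_mul, ← Complex.exp_nat_mul, ← hexp]
    ring
  rw [intervalIntegral.integral_congr fun θ _ => hexpand θ,
    intervalIntegral.integral_finsetSum fun j _ =>
      Continuous.intervalIntegrable (by fun_prop) _ _]
  refine Finset.sum_eq_zero fun j hj => ?_
  have hjk : j ≤ k := Nat.lt_succ_iff.1 (mem_range.1 hj)
  rw [intervalIntegral.integral_const_mul, integral_exp_int_mul_I_eq_zero (by omega), mul_zero]

theorem integral_cos_add_sin_pow_mul_cos_eq_zero (a b : ℝ) {k n : ℕ} (hk : k < n) :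
    ∫ θ in (-π)..π, (a * Real.cos θ + b * Real.sin θ) ^ k * Real.cos (n * θ) = 0 := by
  have h := integral_cos_add_sin_pow_mul_exp_eq_zero a b (N := n) (by simpa using hk)
  have hre : ∀ θ : ℝ, (a * Real.cos θ + b * Real.sin θ) ^ k * Real.cos (n * θ) =
      RCLike.re (((a * Real.cos θ + b * Real.sin θ : ℝ) : ℂ) ^ k * exp ((n : ℤ) * θ * I)) := by
    intro θ
    rw [← ofReal_pow, RCLike.re_to_complex, re_ofReal_mul]
    push_cast
    rw [← ofReal_natCast, ← ofReal_mul, exp_ofReal_mul_I_re]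
  simp only [hre]
  rw [intervalIntegral.intervalIntegral_re (Continuous.intervalIntegrable (by fun_prop) _ _), h,
    map_zero]

theorem abs_sum_mul_le_of_mem_box {d : ℕ} {r ρ : ℝ} {ξ x : Fin d → ℝ} (hξ : ξ ∈ box d r)
    (hx : ‖x‖ ≤ ρ) : |∑ j, ξ j * x j| ≤ d * (r * ρ) :=
  calc |∑ j, ξ j * x j| ≤ ∑ j, |ξ j * x j| := abs_sum_le_sum_abs _ _
    _ ≤ ∑ _j : Fin d, r * ρ := Finset.sum_le_sum fun j _ => by
        rw [abs_mul, ← Real.norm_eq_abs (x j)]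
        exact mul_le_mul (hξ j) ((norm_le_pi_norm x j).trans hx) (norm_nonneg _)
          ((abs_nonneg _).trans (hξ j))
    _ = d * (r * ρ) := by simp

theorem measurable_gfun : Measurable gfun :=
  Measurable.ite (measurableSet_lt measurable_const measurable_id |>.inter
    (measurableSet_lt measurable_id measurable_const)) (by fun_prop) measurable_const

theorem abs_gfun_le_one (t : ℝ) : |gfun t| ≤ 1 := by
  unfold gfun
  split_ifs with h
  · rw [abs_of_pos (Real.exp_pos _), Real.exp_le_one_iff]
    exact div_nonpos_of_nonneg_of_nonpos zero_le_one (by nlinarith [h.1, h.2])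
  · simp

theorem gfun_eq_zero_of_two_le {t : ℝ} (ht : 2 ≤ t) : gfun t = 0 :=
  if_neg fun h => h.2.not_ge ht

theorem measurable_vnm (n m : ℕ) : Measurable (vnm n m) := by
  unfold vnm
  have := measurable_gfun
  fun_prop

theorem norm_vnm_le_one (n m : ℕ) (x : Fin 2 → ℝ) : ‖vnm n m x‖ ≤ 1 := by
  set z : ℂ := (x 0 : ℂ) + (x 1 : ℂ) * I
  have hcoef : ‖((n : ℂ) ^ m)⁻¹‖ ≤ 1 := by
    rw [norm_inv, norm_pow, Complex.norm_natCast, ← Nat.cast_pow]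
    rcases (n ^ m).eq_zero_or_pos with h | h
    · simp [h]
    · exact inv_le_one_of_one_le₀ (by exact_mod_cast h)
  have hphase : ‖(z / ((‖z‖ : ℝ) : ℂ)) ^ n‖ ≤ 1 := by
    rw [norm_pow, norm_div, Complex.norm_real, norm_norm]
    exact pow_le_one₀ (by positivity) (div_self_le_one _)
  have hg : ‖((gfun ‖z‖ : ℝ) : ℂ)‖ ≤ 1 := by
    rw [Complex.norm_real, Real.norm_eq_abs]; exact abs_gfun_le_one _
  calc ‖vnm n m x‖
      = ‖((n : ℂ) ^ m)⁻¹‖ * ‖(z / ((‖z‖ : ℝ) : ℂ)) ^ n‖ * ‖((gfun ‖z‖ : ℝ) : ℂ)‖ := by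
        rw [vnm, norm_mul, norm_mul]
    _ ≤ 1 * 1 * 1 := by gcongr
    _ = 1 := by ring

theorem support_vnm_subset_closedBall (n m : ℕ) :
    support (vnm n m) ⊆ Metric.closedBall 0 2 := by
  intro x hx
  set z : ℂ := (x 0 : ℂ) + (x 1 : ℂ) * I
  have hz : ‖z‖ < 2 := by
    by_contra! h
    exact hx (by simp [vnm, z, gfun_eq_zero_of_two_le h])
  rw [mem_closedBall_zero_iff, pi_norm_le_iff_of_nonneg zero_le_two]
  intro j
  fin_cases j
  · simpa [z] using (Complex.abs_re_le_norm z).trans hz.le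
  · simpa [z] using (Complex.abs_im_le_norm z).trans hz.le

theorem re_vnm_polar (n m : ℕ) {t : ℝ} (ht : 0 < t) (θ : ℝ) :
    (vnm n m ![t * Real.cos θ, t * Real.sin θ]).re =
      ((n : ℝ) ^ m)⁻¹ * gfun t * Real.cos (n * θ) := by
  have hz : ((t * Real.cos θ : ℝ) : ℂ) + ((t * Real.sin θ : ℝ) : ℂ) * I = t * exp (θ * I) := by
    rw [Complex.exp_mul_I]; push_cast; ring
  have hnorm : ‖(t : ℂ) * exp (θ * I)‖ = t := by
    rw [norm_mul, norm_real, Real.norm_eq_abs, abs_of_pos ht, norm_exp_ofReal_mul_I, mul_one]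
  have hv : vnm n m ![t * Real.cos θ, t * Real.sin θ] =
      ((((n : ℝ) ^ m)⁻¹ * gfun t : ℝ) : ℂ) * exp ((n * θ : ℝ) * I) := by
    simp only [vnm, Matrix.cons_val_zero, Matrix.cons_val_one, hz, hnorm]
    rw [mul_div_cancel_left₀ _ (ofReal_ne_zero.2 ht.ne'), ← Complex.exp_nat_mul]
    push_cast
    ring_nf
  rw [hv, re_ofReal_mul, exp_ofReal_mul_I_re]

theorem integral_sum_mul_pow_mul_re_vnm_eq_zero {n k : ℕ} (m : ℕ) (hk : k < n)
    (ξ : Fin 2 → ℝ) :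
    ∫ x : Fin 2 → ℝ, (∑ j, ξ j * x j) ^ k * (vnm n m x).re = 0 := by
  set G : (Fin 2 → ℝ) → ℝ := fun x => (∑ j, ξ j * x j) ^ k * (vnm n m x).re
  have hcoord : ∫ x, G x = ∫ p : ℝ × ℝ, G ![p.1, p.2] :=
    (((volume_preserving_finTwoArrow ℝ).symm _).integral_comp
      (MeasurableEquiv.measurableEmbedding _) G).symm
  set A : ℝ → ℝ := fun t => t ^ (k + 1) * ((n : ℝ) ^ m)⁻¹ * gfun t
  set B : ℝ → ℝ := fun θ => (ξ 0 * Real.cos θ + ξ 1 * Real.sin θ) ^ k * Real.cos (n * θ)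
  have hpolar : ∀ p ∈ polarCoord.target,
      p.1 • G ![(polarCoord.symm p).1, (polarCoord.symm p).2] = A p.1 * B p.2 := by
    rintro ⟨t, θ⟩ ⟨ht, -⟩
    simp only [G, A, B, polarCoord_symm_apply, Fin.sum_univ_two, Matrix.cons_val_zero,
      Matrix.cons_val_one, re_vnm_polar n m ht, smul_eq_mul]
    rw [show ξ 0 * (t * Real.cos θ) + ξ 1 * (t * Real.sin θ) =
      t * (ξ 0 * Real.cos θ + ξ 1 * Real.sin θ) by ring, mul_pow]
    ring
  rw [hcoord, ← integral_comp_polarCoord_symm,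
    setIntegral_congr_fun polarCoord.open_target.measurableSet hpolar,
    show polarCoord.target = Set.Ioi 0 ×ˢ Set.Ioo (-π) π from rfl, Measure.volume_eq_prod,
    setIntegral_prod_mul, ← integral_Ioc_eq_integral_Ioo,
    ← intervalIntegral.integral_of_le (by linarith [pi_pos]),
    integral_cos_add_sin_pow_mul_cos_eq_zero _ _ hk, mul_zero]

theorem stmt7_general (m : ℕ) (r : ℝ) :
    ∃ C > 0, ∀ n : ℕ, 1 ≤ n → ∀ ξ ∈ box 2 r,
      ‖FT 2 (fun x => (((vnm n m x).re : ℝ) : ℂ)) ξ‖ ≤ C * Real.exp (-(n : ℝ)) := by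
  set K := Metric.closedBall (0 : Fin 2 → ℝ) 2
  have hK_pos : 0 < volume.real K :=
    ENNReal.toReal_pos (Metric.measure_closedBall_pos volume 0 two_pos).ne'
      measure_closedBall_lt_top.ne
  refine ⟨((2 * π) ^ 2)⁻¹ * (Real.exp (Real.exp 1 * (2 * (r * 2))) * volume.real K),
    by positivity, fun n _ ξ hξ => ?_⟩
  have hmom : ∀ k < n, ∫ x, ((∑ j, ξ j * x j : ℝ) : ℂ) ^ k * ((vnm n m x).re : ℂ) = 0 :=
    fun k hk => by
      simp only [← ofReal_pow, ← ofReal_mul]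
      rw [integral_complex_ofReal, integral_sum_mul_pow_mul_re_vnm_eq_zero m hk ξ, ofReal_zero]
  have hest := norm_integral_exp_mul_le_of_moments_eq_zero (isCompact_closedBall 0 2)
    (measurable_vnm n m).re.complex_ofReal.aestronglyMeasurable
    (fun x => by simpa using (abs_re_le_norm _).trans (norm_vnm_le_one n m x))
    (fun x hx => support_vnm_subset_closedBall n m fun h => hx (by simp [h])) (by fun_prop)
    (fun x hx => abs_sum_mul_le_of_mem_box hξ (mem_closedBall_zero_iff.1 hx)) hmom
  calc ‖FT 2 (fun x => (((vnm n m x).re : ℝ) : ℂ)) ξ‖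
      = ((2 * π) ^ 2)⁻¹ * ‖∫ x, Complex.exp (I * ((∑ j, ξ j * x j : ℝ) : ℂ)) *
          ((vnm n m x).re : ℂ)‖ := by
        rw [FT, norm_mul, norm_inv, norm_real, Real.norm_of_nonneg (by positivity)]
    _ ≤ ((2 * π) ^ 2)⁻¹ * (Real.exp (Real.exp 1 * (2 * (r * 2))) * Real.exp (-n) * 1 *
          volume.real K) := by
        gcongr
        simpa using hest
    _ = _ := by ring

/-- Lemma 5.1 of the paper. -/
theorem stmt7 (m : ℕ) (r : ℝ) (hr : 0 < r) :
    ∃ C > 0, ∀ n : ℕ, 1 ≤ n → ∀ ξ ∈ box 2 r,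
      ‖FT 2 (fun x => (((vnm n m x).re : ℝ) : ℂ)) ξ‖ ≤ C * Real.exp (-(n : ℝ)) :=
  stmt7_general m r
end
end

section
/- For all integers d ≥ 1 and n ≥ 1 and every real λ with 0 ≤ λ ≤ 1/4, one has (1−λ)^{−d} − Σ_{k=0}^{n−1} binom(k+d−1, k) λ^k ≤ binom(n+d−1, n) (4/3)^d (4λ/3)^n. -/
open Nat Finset

private lemma fact_ineq (n m e : ℕ) :
    (n + m + e)! * (n ! * m ! * e !) ≤ (n + e)! * (m + e)! * (n + m)! := by
  induction m with
  | zero =>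
    apply Nat.le_of_eq
    simp [Nat.factorial]
    ring
  | succ m ih =>
    have key : (n + m + e + 1) * (m + 1) ≤ (m + e + 1) * (n + m + 1) := by nlinarith
    calc (n + (m + 1) + e)! * (n ! * (m + 1)! * e !)
        = ((n + m + e + 1) * (m + 1)) * ((n + m + e)! * (n ! * m ! * e !)) := by
          rw [show n + (m + 1) + e = (n + m + e) + 1 by ring, Nat.factorial_succ,
            Nat.factorial_succ]
          ring
      _ ≤ ((m + e + 1) * (n + m + 1)) * ((n + e)! * (m + e)! * (n + m)!) :=
          Nat.mul_le_mul key ih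
      _ = (n + e)! * ((m + 1) + e)! * (n + (m + 1))! := by
          rw [show (m + 1) + e = (m + e) + 1 by ring, show n + (m + 1) = (n + m) + 1 by ring,
            Nat.factorial_succ, Nat.factorial_succ]
          ring

private lemma choose_ineq (n m e : ℕ) :
    (n + m + e).choose (n + m) ≤ (n + e).choose n * (m + e).choose m := by
  have h1 : (n + m + e).choose (n + m) * (n + m)! * e ! = (n + m + e)! := by
    simpa [Nat.add_sub_cancel_left] using
      Nat.choose_mul_factorial_mul_factorial (Nat.le_add_right (n + m) e)
  have h2 : (n + e).choose n * n ! * e ! = (n + e)! := by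
    simpa [Nat.add_sub_cancel_left] using
      Nat.choose_mul_factorial_mul_factorial (Nat.le_add_right n e)
  have h3 : (m + e).choose m * m ! * e ! = (m + e)! := by
    simpa [Nat.add_sub_cancel_left] using
      Nat.choose_mul_factorial_mul_factorial (Nat.le_add_right m e)
  have hK : 0 < (n + m)! * e ! * (n ! * m ! * e !) := by positivity
  apply Nat.le_of_mul_le_mul_right _ hK
  calc (n + m + e).choose (n + m) * ((n + m)! * e ! * (n ! * m ! * e !))
      = (n + m + e)! * (n ! * m ! * e !) := by rw [← h1]; ring
    _ ≤ (n + e)! * (m + e)! * (n + m)! := fact_ineq n m e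
    _ = ((n + e).choose n * (m + e).choose m) * ((n + m)! * e ! * (n ! * m ! * e !)) := by
        rw [← h2, ← h3]; ring

/-- The Taylor-remainder inequality from the proof of Lemma 4.1 (b). -/
theorem stmt11 (d n : ℕ) (hd : 1 ≤ d) (hn : 1 ≤ n) (lam : ℝ)
    (h0 : 0 ≤ lam) (h4 : lam ≤ 1 / 4) :
    (1 - lam) ^ (-(d : ℤ)) - ∑ k ∈ Finset.range n, ((k + d - 1).choose k : ℝ) * lam ^ k ≤
      ((n + d - 1).choose n : ℝ) * (4 / 3) ^ d * (4 * lam / 3) ^ n := by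
  obtain ⟨e, rfl⟩ : ∃ e, d = e + 1 := ⟨d - 1, by omega⟩
  set d := e + 1 with hde
  have hnorm : ‖lam‖ < 1 := by
    rw [Real.norm_eq_abs, abs_of_nonneg h0]; linarith
  set f : ℕ → ℝ := fun j ↦ ((j + e).choose e : ℝ) * lam ^ j with hf
  have hS : HasSum f (1 / (1 - lam) ^ (e + 1)) :=
    hasSum_choose_mul_geometric_of_norm_lt_one e hnorm
  have hsum : Summable f := hS.summable
  -- rewrite the finite sum
  have hfun : ∀ j : ℕ, ((j + d - 1).choose j : ℝ) * lam ^ j = f j := by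
    intro j
    rw [hf, show j + d - 1 = j + e by omega, Nat.choose_symm_add]
  have hsplit : ∑ k ∈ Finset.range n, f k + ∑' m, f (m + n) = 1 / (1 - lam) ^ (e + 1) :=
    (Summable.sum_add_tsum_nat_add n hsum).trans hS.tsum_eq
  have hzpow : (1 - lam) ^ (-(d : ℤ)) = 1 / (1 - lam) ^ d := by
    rw [zpow_neg, zpow_natCast, one_div]
  have hLHS : (1 - lam) ^ (-(d : ℤ)) - ∑ k ∈ Finset.range n, ((k + d - 1).choose k : ℝ) * lam ^ k
      = ∑' m, f (m + n) := by
    rw [hzpow, Finset.sum_congr rfl (fun k _ ↦ hfun k), hde]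
    linarith [hsplit]
  rw [hLHS]
  have hc : (n + d - 1).choose n = (n + e).choose e := by
    rw [show n + d - 1 = n + e by omega, Nat.choose_symm_add]
  set c : ℝ := ((n + d - 1).choose n : ℝ) with hcdef
  have hc0 : 0 ≤ c := Nat.cast_nonneg _
  -- termwise bound
  set g : ℕ → ℝ := fun m ↦ c * lam ^ n * f m with hg
  have hterm : ∀ m, f (m + n) ≤ g m := by
    intro m
    have hch : (m + n + e).choose e ≤ (n + e).choose e * (m + e).choose e := by
      calc (m + n + e).choose e = (n + m + e).choose (n + m) := by
            rw [show m + n + e = (n + m) + e by ring, ← Nat.choose_symm_add]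
        _ ≤ (n + e).choose n * (m + e).choose m := choose_ineq n m e
        _ = (n + e).choose e * (m + e).choose e := by
            rw [Nat.choose_symm_add, Nat.choose_symm_add]
    have hchR : ((m + n + e).choose e : ℝ) ≤ ((n + e).choose e : ℝ) * ((m + e).choose e : ℝ) := by
      exact_mod_cast hch
    have hp : (0 : ℝ) ≤ lam ^ (m + n) := by positivity
    calc f (m + n) = ((m + n + e).choose e : ℝ) * lam ^ (m + n) := rfl
      _ ≤ (((n + e).choose e : ℝ) * ((m + e).choose e : ℝ)) * lam ^ (m + n) := by
          exact mul_le_mul_of_nonneg_right hchR hp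
      _ = g m := by
          rw [hg, hcdef, hc, hf, pow_add]; ring
  have hsumg : Summable g := hsum.mul_left _
  have hsumf' : Summable (fun m ↦ f (m + n)) := (summable_nat_add_iff n).2 hsum
  have htail : ∑' m, f (m + n) ≤ c * lam ^ n * (1 / (1 - lam) ^ (e + 1)) := by
    calc ∑' m, f (m + n) ≤ ∑' m, g m := Summable.tsum_le_tsum hterm hsumf' hsumg
      _ = c * lam ^ n * (1 / (1 - lam) ^ (e + 1)) := by
          rw [hg]
          rw [tsum_mul_left, hS.tsum_eq]
  refine htail.trans ?_
  -- final numeric bound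
  have h34 : (3 : ℝ) / 4 ≤ 1 - lam := by linarith
  have hinv : (1 - lam)⁻¹ ≤ 4 / 3 := by
    calc (1 - lam)⁻¹ ≤ ((3 : ℝ) / 4)⁻¹ := by
          apply inv_anti₀ (by norm_num) h34
      _ = 4 / 3 := by norm_num
  have hB : 1 / (1 - lam) ^ (e + 1) ≤ (4 / 3 : ℝ) ^ d := by
    rw [one_div, ← inv_pow, hde]
    exact pow_le_pow_left₀ (by positivity) hinv d
  have hA : lam ^ n ≤ (4 * lam / 3) ^ n := pow_le_pow_left₀ h0 (by linarith) n
  calc c * lam ^ n * (1 / (1 - lam) ^ (e + 1))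
      ≤ c * (4 * lam / 3) ^ n * (4 / 3 : ℝ) ^ d := by
        apply mul_le_mul _ hB (by positivity) (by positivity)
        exact mul_le_mul_of_nonneg_left hA hc0
    _ = c * (4 / 3) ^ d * (4 * lam / 3) ^ n := by ring
end

section
/- For every real number a, every real φ₀, and every integer n ≥ 0, one has |∫_0^{2π} e^{i a cos(φ − φ₀)} e^{i n φ} dφ| ≤ 2π e^{−n} e^{|a| e / 2}. -/
/-! The integrand is the restriction to `ℝ` of an entire `2π`-periodic function. By Cauchy's
theorem on the rectangle `[0, 2π] × [0, 1]`, whose vertical sides cancel by periodicity, the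
integral may be taken over the line `Im z = 1` instead. There `|e^{i n z}| = e^{-n}`, and
`|e^{i a cos(z - φ₀)}| = e^{-a Im cos(z - φ₀)} ≤ e^{|a| e / 2}` because
`|Im cos z| = |sin (Re z)| |sinh (Im z)| ≤ e^{|Im z|} / 2`. -/

open Complex

theorem Complex.im_cos (z : ℂ) : (cos z).im = -(Real.sin z.re * Real.sinh z.im) := by
  rw [cos_eq z]
  simp [← ofReal_cos, ← ofReal_sin, ← ofReal_cosh, ← ofReal_sinh]

theorem Real.abs_sinh_le_exp_abs_div_two (x : ℝ) : |Real.sinh x| ≤ Real.exp |x| / 2 := by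
  rw [Real.abs_sinh, Real.sinh_eq]
  linarith [Real.exp_pos (-|x|)]

theorem Complex.abs_im_cos_le (z : ℂ) : |(cos z).im| ≤ Real.exp |z.im| / 2 := by
  rw [im_cos, abs_neg, abs_mul]
  calc |Real.sin z.re| * |Real.sinh z.im| ≤ 1 * (Real.exp |z.im| / 2) :=
        mul_le_mul (Real.abs_sin_le_one _) (Real.abs_sinh_le_exp_abs_div_two _) (abs_nonneg _)
          zero_le_one
    _ = Real.exp |z.im| / 2 := one_mul _

theorem Complex.norm_exp_I_mul_ofReal_mul_cos_le (a : ℝ) (z : ℂ) :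
    ‖exp (I * (a * cos z))‖ ≤ Real.exp (|a| * Real.exp |z.im| / 2) := by
  rw [norm_exp, mul_div_assoc]
  gcongr
  calc (I * (a * cos z)).re = -(a * (cos z).im) := by simp
    _ ≤ |a| * |(cos z).im| := by rw [← abs_mul]; exact neg_le_abs _
    _ ≤ |a| * (Real.exp |z.im| / 2) := by gcongr; exact abs_im_cos_le z

theorem Function.Periodic.intervalIntegral_add_mul_I_eq {E : Type*} [NormedAddCommGroup E]
    [NormedSpace ℂ E] {f : ℂ → E} {T : ℝ} (hf : Differentiable ℂ f)
    (hT : Function.Periodic f T) (y : ℝ) :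
    ∫ x in (0 : ℝ)..T, f (x + y * I) = ∫ x in (0 : ℝ)..T, f x := by
  have h := integral_boundary_rect_eq_zero_of_differentiableOn f 0 (T + y * I) hf.differentiableOn
  have hvert : ∀ t : ℝ, f (T + t * I) = f (0 + t * I) := fun t => by
    rw [zero_add, add_comm]; exact hT _
  simp only [zero_re, zero_im, add_re, add_im, ofReal_re, ofReal_im, mul_re, mul_im, I_re, I_im,
    mul_zero, mul_one, sub_zero, zero_add, add_zero, ofReal_zero, zero_mul, hvert,
    add_sub_cancel_right, sub_eq_zero] at h
  exact h.symm

noncomputable def besselIntegrand (a φ₀ : ℝ) (n : ℕ) (z : ℂ) : ℂ :=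
  exp (I * (a * cos (z - φ₀))) * exp (I * n * z)

namespace besselIntegrand

variable (a φ₀ : ℝ) (n : ℕ)

theorem differentiable : Differentiable ℂ (besselIntegrand a φ₀ n) := by
  unfold besselIntegrand
  fun_prop

theorem periodic : Function.Periodic (besselIntegrand a φ₀ n) (2 * Real.pi : ℝ) := fun z => by
  have hcos : cos (z + (2 * Real.pi : ℝ) - φ₀) = cos (z - φ₀) := by
    rw [add_sub_right_comm, ofReal_mul, ofReal_ofNat, cos_add_two_pi]
  have hexp : exp (I * n * (z + (2 * Real.pi : ℝ))) = exp (I * n * z) := by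
    rw [show I * n * (z + (2 * Real.pi : ℝ)) = I * n * z + (n : ℤ) * (2 * Real.pi * I) by
      push_cast; ring, exp_add, exp_int_mul_two_pi_mul_I, mul_one]
  simp only [besselIntegrand, hcos, hexp]

theorem norm_le (z : ℂ) :
    ‖besselIntegrand a φ₀ n z‖ ≤ Real.exp (-(n * z.im)) * Real.exp (|a| * Real.exp |z.im| / 2) := by
  rw [besselIntegrand, norm_mul, mul_comm (Real.exp _)]
  gcongr
  · simpa using norm_exp_I_mul_ofReal_mul_cos_le a (z - φ₀)
  · rw [norm_exp]; simp

end besselIntegrand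

/-- The oscillatory-integral bound from the proof of Lemma 5.1. -/
theorem stmt16 (a φ₀ : ℝ) (n : ℕ) :
    ‖∫ φ in (0 : ℝ)..(2 * Real.pi),
        Complex.exp (Complex.I * ((a * Real.cos (φ - φ₀) : ℝ) : ℂ)) *
          Complex.exp (Complex.I * (n : ℂ) * (φ : ℂ))‖ ≤
      2 * Real.pi * Real.exp (-(n : ℝ)) * Real.exp (|a| * Real.exp 1 / 2) := by
  have h_shift := (besselIntegrand.periodic a φ₀ n).intervalIntegral_add_mul_I_eq
    (besselIntegrand.differentiable a φ₀ n) 1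
  have h_line : ∀ x : ℝ, ‖besselIntegrand a φ₀ n (x + (1 : ℝ) * I)‖ ≤
      Real.exp (-(n : ℝ)) * Real.exp (|a| * Real.exp 1 / 2) := fun x => by
    simpa using besselIntegrand.norm_le a φ₀ n (x + (1 : ℝ) * I)
  calc _ = ‖∫ x in (0 : ℝ)..(2 * Real.pi), besselIntegrand a φ₀ n (x + (1 : ℝ) * I)‖ := by
        rw [h_shift]; simp [besselIntegrand]
    _ ≤ Real.exp (-(n : ℝ)) * Real.exp (|a| * Real.exp 1 / 2) * |2 * Real.pi - 0| :=
        intervalIntegral.norm_integral_le_of_norm_le_const fun x _ => h_line x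
    _ = 2 * Real.pi * Real.exp (-(n : ℝ)) * Real.exp (|a| * Real.exp 1 / 2) := by
        rw [sub_zero, abs_of_pos Real.two_pi_pos]; ring
end

section
/- For every integer m ≥ 0 there exists a constant C > 0 such that for all integers n ≥ 1, ‖v_{n,m}‖_{C^m(ℝ²)} ≤ C; that is, every partial derivative of v_{n,m} of order at most m is bounded on ℝ² uniformly in n. -/
open MeasureTheory Real Complex Finset

noncomputable section

/-! Write `z = t e^{iφ}`, so that `v_{n,m} = n^{-m} w^n g(|z|)` with `w = z / |z|`. On the annulus
`1 ≤ |z| ≤ 2` carrying the support of `g(|z|)`, `w` is smooth and unimodular, so by the Leibniz rule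
every derivative of order `i` of `w^n g(|z|)` is `O(n^i)`, uniformly on the plane; for `i ≤ m` the
factor `n^{-m}` absorbs this growth. -/

open scoped ContDiff

section IteratedDerivBounds

variable {𝕜 E F A : Type*} [NontriviallyNormedField 𝕜] [NormedAddCommGroup E] [NormedSpace 𝕜 E]
  [NormedAddCommGroup F] [NormedSpace 𝕜 F] [NormedCommRing A] [NormedAlgebra 𝕜 A]

theorem ContDiffOn.contDiff_of_tsupport_subset {n : WithTop ℕ∞} {f : E → F} {U : Set E}
    (hf : ContDiffOn 𝕜 n f U) (hU : IsOpen U) (hfU : tsupport f ⊆ U) : ContDiff 𝕜 n f :=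
  contDiff_of_contDiffOn_union_of_isOpen hf
    (contDiffOn_const.congr fun _ hx => image_eq_zero_of_notMem_tsupport hx)
    (Set.eq_univ_of_forall fun x => (em (x ∈ tsupport f)).imp_left (@hfU x)) hU
    (isClosed_tsupport f).isOpen_compl

theorem contDiff_pow_mul_of_tsupport_subset {m : WithTop ℕ∞} {w g : E → A} {U : Set E}
    (hU : IsOpen U) (hw : ContDiffOn 𝕜 m w U) (hg : ContDiffOn 𝕜 m g U) (hgU : tsupport g ⊆ U)
    (n : ℕ) :
    ContDiff 𝕜 m fun y => w y ^ n * g y :=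
  ((hw.pow n).mul hg).contDiff_of_tsupport_subset hU (tsupport_mul_subset_right.trans hgU)

theorem ContinuousLinearMap.norm_iteratedFDeriv_comp_right_le {G : Type*} [NormedAddCommGroup G]
    [NormedSpace 𝕜 G] {n : WithTop ℕ∞} {f : E → F} (L : G →L[𝕜] E) (hf : ContDiff 𝕜 n f) (x : G)
    {i : ℕ} (hi : i ≤ n) :
    ‖iteratedFDeriv 𝕜 i (f ∘ L) x‖ ≤ ‖iteratedFDeriv 𝕜 i f (L x)‖ * ‖L‖ ^ i := by
  rw [L.iteratedFDeriv_comp_right hf x hi]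
  refine (ContinuousMultilinearMap.norm_compContinuousLinearMap_le _ _).trans_eq ?_
  rw [Finset.prod_const, Finset.card_univ, Fintype.card_fin]

theorem IsCompact.exists_bound_iteratedFDerivWithin {m : ℕ} {f : E → F} {U K : Set E}
    (hK : IsCompact K) (hKU : K ⊆ U) (hf : ContDiffOn 𝕜 m f U) (hU : UniqueDiffOn 𝕜 U) :
    ∃ D, ∀ k ≤ m, ∀ x ∈ K, ‖iteratedFDerivWithin 𝕜 k f U x‖ ≤ D := by
  have hcont : ContinuousOn
      (fun x => ∑ k ∈ Finset.range (m + 1), ‖iteratedFDerivWithin 𝕜 k f U x‖) K :=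
    continuousOn_finsetSum _ fun k hk =>
      ((hf.continuousOn_iteratedFDerivWithin
        (by exact_mod_cast Nat.lt_succ_iff.mp (Finset.mem_range.mp hk)) hU).mono hKU).norm
  obtain ⟨D, hD⟩ := hK.exists_bound_of_continuousOn hcont
  refine ⟨D, fun k hk x hx => le_trans ?_ ((le_abs_self _).trans (hD x hx))⟩
  exact Finset.single_le_sum (f := fun k => ‖iteratedFDerivWithin 𝕜 k f U x‖)
    (fun _ _ => norm_nonneg _) (Finset.mem_range.mpr (Nat.lt_succ_of_le hk))

variable [NormOneClass A] {w g : E → A} {U K : Set E} {x : E} {D : ℝ}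

/-- Writing `w ^ n` as a product of `n` factors, the `j` differentiations are distributed among
the factors in `n ^ j` ways (multinomial theorem), each costing at most `D ^ j` because the
undifferentiated factors have norm at most one. -/
theorem norm_iteratedFDerivWithin_pow_le {j : ℕ} (hw : ContDiffOn 𝕜 j w U)
    (hU : UniqueDiffOn 𝕜 U) (hx : x ∈ U) (hwx : ‖w x‖ ≤ 1) (hD1 : 1 ≤ D)
    (hD : ∀ k ≤ j, ‖iteratedFDerivWithin 𝕜 k w U x‖ ≤ D) (n : ℕ) :
    ‖iteratedFDerivWithin 𝕜 j (fun y => w y ^ n) U x‖ ≤ (n * D) ^ j := by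
  classical
  have hprod : (fun y => w y ^ n) = fun y => ∏ _i : Fin n, w y := by simp
  have hcount : ∀ p ∈ (Finset.univ : Finset (Fin n)).sym j,
      ∏ i, ‖iteratedFDerivWithin 𝕜 (Multiset.count i (p : Multiset (Fin n))) w U x‖ ≤ D ^ j := by
    intro p _
    calc ∏ i, ‖iteratedFDerivWithin 𝕜 (Multiset.count i (p : Multiset (Fin n))) w U x‖
        ≤ ∏ i, D ^ Multiset.count i (p : Multiset (Fin n)) := by
          refine Finset.prod_le_prod (fun _ _ => norm_nonneg _) fun i _ => ?_
          rcases Nat.eq_zero_or_pos (Multiset.count i (p : Multiset (Fin n))) with h0 | hpos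
          · rwa [h0, pow_zero, norm_iteratedFDerivWithin_zero]
          · exact (hD _ ((Multiset.count_le_card i _).trans_eq p.2)).trans
              (le_self_pow₀ hD1 hpos.ne')
      _ = D ^ j := by
          rw [Finset.prod_pow_eq_pow_sum, Multiset.sum_count_eq_card (by simp), Sym.card_coe]
  have hperms : ∑ p ∈ (Finset.univ : Finset (Fin n)).sym j,
      ((p : Multiset (Fin n)).countPerms : ℝ) = (n : ℝ) ^ j := by
    simpa using (Finset.sum_pow (s := Finset.univ) (fun _ : Fin n => (1 : ℝ)) j).symm
  rw [hprod]
  calc _ ≤ ∑ p ∈ (Finset.univ : Finset (Fin n)).sym j, ((p : Multiset (Fin n)).countPerms : ℝ) *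
        ∏ i, ‖iteratedFDerivWithin 𝕜 (Multiset.count i (p : Multiset (Fin n))) w U x‖ :=
        norm_iteratedFDerivWithin_prod_le (fun _ _ => hw) hU hx le_rfl
    _ ≤ ∑ p ∈ (Finset.univ : Finset (Fin n)).sym j,
        ((p : Multiset (Fin n)).countPerms : ℝ) * D ^ j :=
        Finset.sum_le_sum fun p hp => mul_le_mul_of_nonneg_left (hcount p hp) (by positivity)
    _ = (n * D) ^ j := by rw [← Finset.sum_mul, hperms, mul_pow]

theorem norm_iteratedFDerivWithin_pow_mul_le {i : ℕ} {B : ℝ} (hw : ContDiffOn 𝕜 i w U)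
    (hg : ContDiffOn 𝕜 i g U) (hU : UniqueDiffOn 𝕜 U) (hx : x ∈ U) (hwx : ‖w x‖ ≤ 1)
    (hD1 : 1 ≤ D) (hD : ∀ k ≤ i, ‖iteratedFDerivWithin 𝕜 k w U x‖ ≤ D)
    (hB : ∀ k ≤ i, ‖iteratedFDerivWithin 𝕜 k g U x‖ ≤ B) (n : ℕ) :
    ‖iteratedFDerivWithin 𝕜 i (fun y => w y ^ n * g y) U x‖ ≤ (n * D + 1) ^ i * B := by
  calc _ ≤ ∑ j ∈ Finset.range (i + 1), (i.choose j : ℝ) *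
        ‖iteratedFDerivWithin 𝕜 j (fun y => w y ^ n) U x‖ *
          ‖iteratedFDerivWithin 𝕜 (i - j) g U x‖ :=
        norm_iteratedFDerivWithin_mul_le (hw.pow n) hg hU hx le_rfl
    _ ≤ ∑ j ∈ Finset.range (i + 1), (n * D) ^ j * 1 ^ (i - j) * (i.choose j : ℝ) * B := by
        refine Finset.sum_le_sum fun j hj => ?_
        have hji : j ≤ i := Nat.lt_succ_iff.mp (Finset.mem_range.mp hj)
        have hpow := norm_iteratedFDerivWithin_pow_le (hw.of_le (by exact_mod_cast hji)) hU hx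
          hwx hD1 (fun k hk => hD k (hk.trans hji)) n
        rw [one_pow, mul_one, mul_comm ((n * D) ^ j)]
        gcongr
        exact hB _ (Nat.sub_le i j)
    _ = (n * D + 1) ^ i * B := by rw [← Finset.sum_mul, add_pow]

theorem exists_norm_iteratedFDeriv_pow_mul_le {m : ℕ} (hU : IsOpen U) (hK : IsCompact K)
    (hKU : K ⊆ U) (hw : ContDiffOn 𝕜 m w U) (hwK : ∀ x ∈ K, ‖w x‖ ≤ 1)
    (hg : ContDiffOn 𝕜 m g U) (hgK : tsupport g ⊆ K) :
    ∃ C, ∀ n : ℕ, ∀ i ≤ m, ∀ x, ‖iteratedFDeriv 𝕜 i (fun y => w y ^ n * g y) x‖ ≤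
      C * (n + 1) ^ i := by
  obtain ⟨D, hD⟩ := hK.exists_bound_iteratedFDerivWithin hKU hw hU.uniqueDiffOn
  obtain ⟨B, hB⟩ := hK.exists_bound_iteratedFDerivWithin hKU hg hU.uniqueDiffOn
  refine ⟨max D 1 ^ m * max B 0, fun n i hi x => ?_⟩
  by_cases hxK : x ∈ K
  · have hxU := hKU hxK
    have him : (i : WithTop ℕ∞) ≤ m := by exact_mod_cast hi
    rw [← iteratedFDerivWithin_of_isOpen i hU hxU]
    calc _ ≤ (n * max D 1 + 1) ^ i * max B 0 :=
          norm_iteratedFDerivWithin_pow_mul_le (hw.of_le him) (hg.of_le him) hU.uniqueDiffOn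
            hxU (hwK x hxK) (le_max_right _ _)
            (fun k hk => (hD k (hk.trans hi) x hxK).trans (le_max_left _ _))
            (fun k hk => (hB k (hk.trans hi) x hxK).trans (le_max_left _ _)) n
      _ ≤ (max D 1 * (n + 1)) ^ i * max B 0 := by
          gcongr
          nlinarith [le_max_right D 1]
      _ = max D 1 ^ i * max B 0 * (n + 1) ^ i := by rw [mul_pow]; ring
      _ ≤ max D 1 ^ m * max B 0 * (n + 1) ^ i := by
          gcongr
          exact le_max_right _ _
  · have hzero : iteratedFDeriv 𝕜 i (fun y => w y ^ n * g y) x = 0 :=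
      Function.notMem_support.mp fun hx =>
        hxK (hgK (tsupport_mul_subset_right (support_iteratedFDeriv_subset i hx)))
    rw [hzero, norm_zero]
    positivity

end IteratedDerivBounds

theorem gfun_eq_mul_expNegInvGlue :
    gfun = fun t => expNegInvGlue (t - 1) * expNegInvGlue (2 - t) := by
  funext t
  by_cases ht : 1 < t ∧ t < 2
  · rw [gfun, if_pos ht, expNegInvGlue, if_neg (by linarith), expNegInvGlue,
      if_neg (by linarith), ← Real.exp_add]
    have h1 : t - 1 ≠ 0 := by linarith
    have h2 : t - 2 ≠ 0 := by linarith
    have h2' : 2 - t ≠ 0 := by linarith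
    congr 1
    field_simp
    ring
  · rw [gfun, if_neg ht]
    rcases not_and_or.mp ht with h | h
    · rw [expNegInvGlue.zero_of_nonpos (by linarith), zero_mul]
    · rw [expNegInvGlue.zero_of_nonpos (x := 2 - t) (by linarith), mul_zero]

theorem contDiff_gfun {n : ℕ∞} : ContDiff ℝ n gfun := by
  rw [gfun_eq_mul_expNegInvGlue]
  exact (expNegInvGlue.contDiff.comp (contDiff_id.sub contDiff_const)).mul
    (expNegInvGlue.contDiff.comp (contDiff_const.sub contDiff_id))

theorem tsupport_gfun_subset : tsupport gfun ⊆ Set.Icc 1 2 :=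
  closure_minimal (fun t ht => by
    by_contra hIcc
    exact ht (if_neg fun h => hIcc ⟨h.1.le, h.2.le⟩)) isClosed_Icc

theorem contDiffOn_div_norm : ContDiffOn ℝ ∞ (fun z : ℂ => z / ‖z‖) {0}ᶜ := by
  intro z hz
  have hnorm : ContDiffAt ℝ ∞ (fun z : ℂ => ((‖z‖ : ℝ) : ℂ)) z :=
    ofRealCLM.contDiff.contDiffAt.comp z (contDiffAt_norm ℝ hz)
  simp_rw [div_eq_mul_inv]
  exact (contDiffAt_id.mul (hnorm.inv (by simpa using hz))).contDiffWithinAt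

theorem contDiffOn_gfun_norm : ContDiffOn ℝ ∞ (fun z : ℂ => ((gfun ‖z‖ : ℝ) : ℂ)) {0}ᶜ :=
  fun z hz => (ofRealCLM.contDiff.contDiffAt.comp z
    (contDiff_gfun.contDiffAt.comp z (contDiffAt_norm ℝ hz))).contDiffWithinAt

theorem tsupport_gfun_norm_subset :
    tsupport (fun z : ℂ => ((gfun ‖z‖ : ℝ) : ℂ)) ⊆ Metric.closedBall 0 2 \ Metric.ball 0 1 := by
  refine (tsupport_comp_subset ofReal_zero _).trans
    ((tsupport_comp_subset_preimage gfun continuous_norm).trans fun z hz => ?_)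
  obtain ⟨h1, h2⟩ := tsupport_gfun_subset hz
  simpa [Metric.mem_closedBall, Metric.mem_ball] using ⟨h2, h1⟩

theorem closedBall_diff_ball_subset_compl_zero :
    Metric.closedBall (0 : ℂ) 2 \ Metric.ball 0 1 ⊆ {0}ᶜ := fun z hz h0 =>
  hz.2 (by rw [Set.mem_singleton_iff.mp h0]; simp)

/-- The function `e^{inφ} g(t)` in polar coordinates `z = t e^{iφ}`. -/
def angularBump (n : ℕ) (z : ℂ) : ℂ := (z / ‖z‖) ^ n * ((gfun ‖z‖ : ℝ) : ℂ)

theorem contDiff_angularBump (n : ℕ) : ContDiff ℝ ∞ (angularBump n) :=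
  contDiff_pow_mul_of_tsupport_subset isOpen_compl_singleton contDiffOn_div_norm
    contDiffOn_gfun_norm (tsupport_gfun_norm_subset.trans closedBall_diff_ball_subset_compl_zero) n

theorem exists_norm_iteratedFDeriv_angularBump_le (m : ℕ) :
    ∃ C, ∀ n : ℕ, ∀ i ≤ m, ∀ z, ‖iteratedFDeriv ℝ i (angularBump n) z‖ ≤ C * (n + 1) ^ i :=
  exists_norm_iteratedFDeriv_pow_mul_le isOpen_compl_singleton
    ((isCompact_closedBall 0 2).diff Metric.isOpen_ball) closedBall_diff_ball_subset_compl_zero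
    (contDiffOn_div_norm.of_le (by exact_mod_cast le_top))
    (fun z _ => by simpa using div_self_le_one ‖z‖)
    (contDiffOn_gfun_norm.of_le (by exact_mod_cast le_top)) tsupport_gfun_norm_subset

def planeToComplex : (Fin 2 → ℝ) →L[ℝ] ℂ :=
  (equivRealProdCLM.symm : ℝ × ℝ →L[ℝ] ℂ).comp
    (ContinuousLinearEquiv.finTwoArrow ℝ ℝ : (Fin 2 → ℝ) →L[ℝ] ℝ × ℝ)

theorem planeToComplex_apply (x : Fin 2 → ℝ) : planeToComplex x = x 0 + x 1 * I := by
  simp [planeToComplex, equivRealProdCLM_symm_apply]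

theorem vnm_eq_smul_angularBump_comp (n m : ℕ) :
    vnm n m = ((n : ℂ) ^ m)⁻¹ • (angularBump n ∘ planeToComplex) := by
  funext x
  simp [vnm, angularBump, planeToComplex_apply, mul_assoc]

/-- Formula (33) of the paper: `‖v_{n,m}‖_{C^m(ℝ²)} = O(1)` as `n → ∞`. -/
theorem stmt19 (m : ℕ) :
    ∃ C > 0, ∀ n : ℕ, 1 ≤ n →
      ContDiff ℝ m (vnm n m) ∧
      ∀ i ≤ m, ∀ x, ‖iteratedFDeriv ℝ i (vnm n m) x‖ ≤ C := by
  obtain ⟨C, hC⟩ := exists_norm_iteratedFDeriv_angularBump_le m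
  set L := planeToComplex
  refine ⟨max C 1 * (2 * max ‖L‖ 1) ^ m, by positivity, fun n hn => ?_⟩
  have hsmooth : ContDiff ℝ m (angularBump n ∘ L) :=
    ((contDiff_angularBump n).comp L.contDiff).of_le (by exact_mod_cast le_top)
  refine ⟨by rw [vnm_eq_smul_angularBump_comp]; exact hsmooth.const_smul ((n : ℂ) ^ m)⁻¹, fun i hi x => ?_⟩
  have hn' : (1 : ℝ) ≤ n := by exact_mod_cast hn
  have hgrowth : ((n : ℝ) + 1) ^ i * ‖L‖ ^ i ≤ (2 * n) ^ m * max ‖L‖ 1 ^ m := by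
    gcongr
    · calc ((n : ℝ) + 1) ^ i ≤ (2 * n) ^ i := by gcongr; linarith
        _ ≤ (2 * n) ^ m := pow_le_pow_right₀ (by linarith) hi
    · exact (pow_le_pow_left₀ (norm_nonneg _) (le_max_left _ _) i).trans
        (pow_le_pow_right₀ (le_max_right _ _) hi)
  rw [vnm_eq_smul_angularBump_comp, iteratedFDeriv_const_smul_apply
    (hsmooth.contDiffAt.of_le (by exact_mod_cast hi)), norm_smul, norm_inv, norm_pow,
    Complex.norm_natCast]
  calc ((n : ℝ) ^ m)⁻¹ * ‖iteratedFDeriv ℝ i (angularBump n ∘ L) x‖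
      ≤ ((n : ℝ) ^ m)⁻¹ * (max C 1 * (n + 1) ^ i * ‖L‖ ^ i) := by
        gcongr
        refine (L.norm_iteratedFDeriv_comp_right_le (contDiff_angularBump n) x
          (by exact_mod_cast le_top)).trans ?_
        gcongr
        exact (hC n i hi (L x)).trans (by gcongr; exact le_max_left _ _)
    _ ≤ ((n : ℝ) ^ m)⁻¹ * (max C 1 * ((2 * n) ^ m * max ‖L‖ 1 ^ m)) := by
        rw [mul_assoc (max C 1)]
        gcongr
    _ = max C 1 * (2 * max ‖L‖ 1) ^ m := by
        field_simp
        ring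
end
end
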